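/- The identities (1 - bt) t^{1-p} Z_w(v,0)(t) = 1 - t^{2-p} Z_w(v,0,u)(t) and (1 - bt) Z_w(0)(t) = 1 - t Z_w(v,0)(t) hold as formal power series; in particular evaluating at t = 1/b gives M_w(v,0) = b and M_w(v,0,u) = b^{2-p}. -/

import Mathlib

/-!
Let `a(l)`, `a_v(l)` and `a_{v,u}(l)` count the `w`-avoiding words of length `l`, those among
them starting with `v`, and those starting with `v` and ending with `u`. Prepending a letter `c`
to a `w`-avoiding word `y` creates an occurrence of `w` only when `c :: y` starts with `w`, that is
when `c = d_1` and `y` starts with `v`; hence `a(l + 1) + a_v(l) = b a(l)`, the second identity.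
Appending a letter to words starting with `v` gives in the same way
`a_v(l + 1) + a_{v,u}(l) = b a_v(l)` for `l ≥ p - 1`; the term `t^{p-1}` is the word `v` itself.
At `t = 1/b` both identities telescope, leaving the boundary term `a(l) b^{-l}`, which decreases
in `l` and tends to `0` because `a` is submultiplicative with `a(p) < b^p`.
-/

open scoped BigOperators
open PowerSeries

/-- Number of (possibly overlapping) occurrences of the block `w` in `X`. -/
def occCount {α : Type*} [DecidableEq α] (w X : List α) : ℕ :=
  ((List.range X.length).filter fun i => (X.drop i).take w.length = w).length

/-- Number of strings of length `l` over `{0,…,b-1}` with exactly `k` occurrences of `w`,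
starting with `x` and ending with `y` (an empty `x` or `y` imposes no constraint). -/
def Nxy (b : ℕ) (w x y : List (Fin b)) (k l : ℕ) : ℕ :=
  Fintype.card {f : Fin l → Fin b //
    occCount w (List.ofFn f) = k ∧ x <+: List.ofFn f ∧ y <:+ List.ofFn f}

/-- The generating series `Z_w(x,k,y)(t)` as a formal power series over `ℚ`. -/
noncomputable def Zser (b : ℕ) (w x y : List (Fin b)) (k : ℕ) : PowerSeries ℚ :=
  PowerSeries.mk fun l => (Nxy b w x y k l : ℚ)

open Finset Filter Topology

theorem List.infix_iff_exists_take_drop {α : Type*} {w x : List α} (hw : w ≠ []) :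
    w <:+: x ↔ ∃ i < x.length, (x.drop i).take w.length = w := by
  constructor
  · rintro ⟨s, t, rfl⟩
    refine ⟨s.length, ?_, by simp⟩
    simp [List.length_pos_iff.2 hw]
  · rintro ⟨i, -, hi⟩
    exact (List.prefix_iff_eq_take.2 hi.symm).isInfix.trans (List.drop_suffix i x).isInfix

theorem List.append_singleton_suffix_append_singleton_iff {α : Type*} {u y : List α} {a c : α} :
    u ++ [a] <:+ y ++ [c] ↔ a = c ∧ u <:+ y := by
  rw [← List.reverse_prefix, List.reverse_concat, List.reverse_concat, List.cons_prefix_cons,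
    List.reverse_prefix]

theorem occCount_eq_zero_iff {α : Type*} [DecidableEq α] {w x : List α} (hw : w ≠ []) :
    occCount w x = 0 ↔ ¬ w <:+: x := by
  simp [occCount, List.infix_iff_exists_take_drop hw]

section WordCount

variable {α : Type*}

noncomputable def wordCount (P : List α → Prop) (l : ℕ) : ℕ :=
  Nat.card {f : Fin l → α // P (List.ofFn f)}

theorem wordCount_congr {P Q : List α → Prop} {l : ℕ}
    (h : ∀ x : List α, x.length = l → (P x ↔ Q x)) : wordCount P l = wordCount Q l :=
  Nat.card_congr (Equiv.subtypeEquivRight fun _ => h _ List.length_ofFn)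

theorem wordCount_eq_zero {P : List α → Prop} {l : ℕ}
    (h : ∀ x : List α, x.length = l → ¬ P x) : wordCount P l = 0 :=
  have : IsEmpty {f : Fin l → α // P (List.ofFn f)} := ⟨fun f => h _ List.length_ofFn f.2⟩
  Nat.card_of_isEmpty

theorem wordCount_eq_one {P : List α → Prop} {v : List α}
    (h : ∀ x : List α, x.length = v.length → (P x ↔ x = v)) : wordCount P v.length = 1 := by
  rw [wordCount_congr h, wordCount, Nat.card_eq_one_iff_unique]
  exact ⟨⟨fun f g => Subtype.ext (List.ofFn_inj.1 (f.2.trans g.2.symm))⟩,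
    ⟨⟨v.get, List.ofFn_get v⟩⟩⟩

theorem wordCount_eq_zero_of_lt_length {P : List α → Prop} {v : List α}
    (h : ∀ x, P x → v <+: x) {l : ℕ} (hl : l < v.length) : wordCount P l = 0 :=
  wordCount_eq_zero fun x hx hP => by have := (h x hP).length_le; omega

theorem wordCount_mono [Finite α] {P Q : List α → Prop} (h : ∀ x, P x → Q x) (l : ℕ) :
    wordCount P l ≤ wordCount Q l :=
  Nat.card_le_card_of_injective (fun f => ⟨f.1, h _ f.2⟩) fun _ _ hfg =>
    Subtype.ext (congrArg (fun f => f.1) hfg)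

theorem wordCount_lt_pow [Fintype α] {P : List α → Prop} {x : List α} (hx : ¬ P x) :
    wordCount P x.length < Fintype.card α ^ x.length := by
  have := Finite.card_subtype_lt (p := fun f : Fin x.length → α => P (List.ofFn f))
    (x := x.get) (by simpa [List.ofFn_get])
  simpa [wordCount, Nat.card_fun] using this

theorem wordCount_eq_add [Fintype α] (P R : List α → Prop) (l : ℕ) :
    wordCount P l = wordCount (fun x => P x ∧ R x) l + wordCount (fun x => P x ∧ ¬ R x) l := by
  classical
  simp only [wordCount, Nat.card_eq_fintype_card, Fintype.card_subtype]
  rw [← Finset.card_filter_add_card_filter_not (fun f => R (List.ofFn f))]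
  simp only [Finset.filter_filter]

theorem wordCount_add_le [Finite α] {P Q R : List α → Prop}
    (h : ∀ x y, P (x ++ y) → Q x ∧ R y) (m n : ℕ) :
    wordCount P (m + n) ≤ wordCount Q m * wordCount R n := by
  rw [wordCount, wordCount, wordCount, ← Nat.card_prod]
  refine Nat.card_le_card_of_injective
    (fun f => (⟨fun i => f.1 (i.castLE (Nat.le_add_right m n)),
        (h _ _ (List.ofFn_add ▸ f.2)).1⟩,
      ⟨fun j => f.1 (j.natAdd m), (h _ _ (List.ofFn_add ▸ f.2)).2⟩)) ?_
  intro f g hfg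
  simp only [Prod.mk.injEq, Subtype.mk.injEq] at hfg
  exact Subtype.ext (funext fun i => Fin.addCases (congrFun hfg.1) (congrFun hfg.2) i)

theorem wordCount_succ_eq_sum_cons [Fintype α] (P : List α → Prop) (l : ℕ) :
    wordCount P (l + 1) = ∑ c, wordCount (fun y => P (c :: y)) l := by
  simp only [wordCount]
  rw [← Nat.card_sigma]
  refine Nat.card_congr (((Fin.consEquiv fun _ => α).symm.subtypeEquiv fun f => ?_).trans
    (Equiv.subtypeProdEquivSigmaSubtype fun c g => P (c :: List.ofFn g)))
  rw [List.ofFn_succ]; rfl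

theorem wordCount_succ_eq_sum_concat [Fintype α] (P : List α → Prop) (l : ℕ) :
    wordCount P (l + 1) = ∑ c, wordCount (fun y => P (y ++ [c])) l := by
  simp only [wordCount]
  rw [← Nat.card_sigma]
  refine Nat.card_congr (((Fin.snocEquiv fun _ => α).symm.subtypeEquiv fun f => ?_).trans
    (Equiv.subtypeProdEquivSigmaSubtype fun c g => P (List.ofFn g ++ [c])))
  rw [List.ofFn_succ', List.concat_eq_append]; rfl

theorem sum_wordCount_eq_and [Fintype α] (a : α) (P : List α → Prop) (l : ℕ) :
    ∑ c, wordCount (fun y => a = c ∧ P y) l = wordCount P l := by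
  rw [Finset.sum_eq_single a (fun c _ hc => wordCount_eq_zero fun _ _ h => hc h.1.symm)
    (by simp)]
  exact wordCount_congr fun _ _ => and_iff_right rfl

end WordCount

section Avoidance

variable {α : Type*} (w : List α)

theorem wordCount_not_infix_zero (hw : w ≠ []) : wordCount (fun x => ¬ w <:+: x) 0 = 1 :=
  wordCount_eq_one (v := []) fun x hx => by simp [List.eq_nil_of_length_eq_zero hx, hw]

theorem wordCount_not_infix_succ_add [Fintype α] (hw : w ≠ []) (l : ℕ) :
    wordCount (fun x => ¬ w <:+: x) (l + 1) + wordCount (fun x => ¬ w <:+: x ∧ w.tail <+: x) l =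
      Fintype.card α * wordCount (fun x => ¬ w <:+: x) l := by
  obtain ⟨a, v, rfl⟩ := List.exists_cons_of_ne_nil hw
  calc _ = ∑ c, (wordCount (fun y => ¬ a :: v <:+: y ∧ ¬ a :: v <+: c :: y) l +
        wordCount (fun y => ¬ a :: v <:+: y ∧ a :: v <+: c :: y) l) := by
        rw [Finset.sum_add_distrib, wordCount_succ_eq_sum_cons, List.tail_cons,
          ← sum_wordCount_eq_and a]
        congr 1 <;> refine Finset.sum_congr rfl fun c _ => wordCount_congr fun y _ => ?_
        · rw [List.infix_cons_iff]; tauto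
        · rw [List.cons_prefix_cons]; tauto
    _ = ∑ _c : α, wordCount (fun x => ¬ a :: v <:+: x) l :=
        Finset.sum_congr rfl fun c _ => by rw [add_comm, ← wordCount_eq_add]
    _ = _ := by simp

theorem wordCount_not_infix_prefix_succ_add [Fintype α] (hw : w ≠ []) {v : List α} {l : ℕ}
    (hl : v.length ≤ l) :
    wordCount (fun x => ¬ w <:+: x ∧ v <+: x) (l + 1) +
        wordCount (fun x => ¬ w <:+: x ∧ v <+: x ∧ w.dropLast <:+ x) l =
      Fintype.card α * wordCount (fun x => ¬ w <:+: x ∧ v <+: x) l := by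
  obtain ⟨u, a, rfl⟩ : ∃ u a, w = u ++ [a] :=
    ⟨_, _, (List.dropLast_append_getLast hw).symm⟩
  calc _ = ∑ c,
        (wordCount (fun y => (¬ u ++ [a] <:+: y ∧ v <+: y) ∧ ¬ u ++ [a] <:+ y ++ [c]) l +
        wordCount (fun y => (¬ u ++ [a] <:+: y ∧ v <+: y) ∧ u ++ [a] <:+ y ++ [c]) l) := by
        rw [Finset.sum_add_distrib, wordCount_succ_eq_sum_concat, List.dropLast_concat,
          ← sum_wordCount_eq_and a]
        congr 1 <;> refine Finset.sum_congr rfl fun c _ => wordCount_congr fun y hy => ?_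
        · have hv : v ≠ y ++ [c] := fun h => by
            have := congrArg List.length h
            simp only [List.length_append, List.length_singleton, hy] at this
            omega
          rw [List.infix_concat_iff, List.prefix_concat_iff]; tauto
        · rw [List.append_singleton_suffix_append_singleton_iff]; tauto
    _ = ∑ _c : α, wordCount (fun x => ¬ u ++ [a] <:+: x ∧ v <+: x) l :=
        Finset.sum_congr rfl fun c _ => by rw [add_comm, ← wordCount_eq_add]
    _ = _ := by simp

theorem wordCount_not_infix_prefix_tail_of_le (hw : w ≠ []) {l : ℕ} (hl : l ≤ w.length - 1) :
    wordCount (fun x => ¬ w <:+: x ∧ w.tail <+: x) l = if l = w.length - 1 then 1 else 0 := by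
  split_ifs with h
  · subst h
    rw [← List.length_tail]
    refine wordCount_eq_one fun x hx => ⟨fun h => (h.2.eq_of_length hx.symm).symm, ?_⟩
    rintro rfl
    refine ⟨fun h => ?_, List.prefix_refl _⟩
    have := h.length_le
    rw [List.length_tail] at this
    have := List.length_pos_iff.2 hw
    omega
  · exact wordCount_eq_zero_of_lt_length (fun x h => h.2) (by simp; omega)

theorem wordCount_not_infix_prefix_tail_succ_add [Fintype α] (hw : w ≠ []) (l : ℕ) :
    wordCount (fun x => ¬ w <:+: x ∧ w.tail <+: x) (l + 1) +
        wordCount (fun x => ¬ w <:+: x ∧ w.tail <+: x ∧ w.dropLast <:+ x) l =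
      Fintype.card α * wordCount (fun x => ¬ w <:+: x ∧ w.tail <+: x) l +
        if l + 1 = w.length - 1 then 1 else 0 := by
  rcases lt_or_ge l (w.length - 1) with hl | hl
  · rw [wordCount_not_infix_prefix_tail_of_le w hw hl,
      wordCount_not_infix_prefix_tail_of_le w hw hl.le, if_neg hl.ne,
      wordCount_eq_zero_of_lt_length (fun x h => h.2.1) (by simpa using hl)]
    simp
  · rw [wordCount_not_infix_prefix_succ_add w hw (by simpa using hl), if_neg (by omega)]
    rfl

end Avoidance

theorem tendsto_atTop_zero_of_antitone_of_le_mul {e : ℕ → ℝ} {p : ℕ} (hp : 0 < p)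
    (he : ∀ n, 0 ≤ e n) (hanti : Antitone e) (hmul : ∀ m n, e (m + n) ≤ e m * e n)
    (hep : e p < 1) : Tendsto e atTop (𝓝 0) := by
  have hpow : ∀ m, e (p * m) ≤ e 0 * e p ^ m := by
    intro m
    induction m with
    | zero => simp
    | succ m ih =>
      calc e (p * (m + 1)) = e (p + p * m) := by ring_nf
        _ ≤ e p * e (p * m) := hmul _ _
        _ ≤ e p * (e 0 * e p ^ m) := by gcongr; exact he p
        _ = e 0 * e p ^ (m + 1) := by ring
  refine squeeze_zero he (fun n => (hanti (Nat.mul_div_le n p)).trans (hpow _)) ?_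
  simpa using ((tendsto_pow_atTop_nhds_zero_of_lt_one (he p) hep).comp
    (Nat.tendsto_div_const_atTop hp.ne')).const_mul (e 0)

theorem hasSum_mul_inv_pow_of_succ_add {c s : ℝ} (hc : 0 < c) {f g h : ℕ → ℝ}
    (h₀ : f 0 = g 0) (hs : ∀ n, f (n + 1) + h n = c * f n + g (n + 1)) (hh : ∀ n, 0 ≤ h n)
    (hf : Tendsto (fun n => f n * c⁻¹ ^ n) atTop (𝓝 0))
    (hg : HasSum (fun n => g n * c⁻¹ ^ n) s) :
    HasSum (fun n => h n * c⁻¹ ^ n) (c * s) := by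
  have hpartial : ∀ N, ∑ n ∈ range N, h n * c⁻¹ ^ n =
      c * (∑ n ∈ range (N + 1), g n * c⁻¹ ^ n - f N * c⁻¹ ^ N) := by
    intro N
    induction N with
    | zero => simp [h₀]
    | succ N ih =>
      rw [Finset.sum_range_succ, ih, Finset.sum_range_succ _ (N + 1), pow_succ]
      linear_combination
        c⁻¹ ^ N * hs N + (f (N + 1) - g (N + 1)) * c⁻¹ ^ N * mul_inv_cancel₀ hc.ne'
  rw [hasSum_iff_tendsto_nat_of_nonneg (fun n => by have := hh n; positivity), funext hpartial]
  simpa using ((hg.tendsto_sum_nat.comp (tendsto_add_atTop_nat 1)).sub hf).const_mul c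

theorem hasSum_ite_eq_mul_pow (k : ℕ) (r : ℝ) :
    HasSum (fun n => (if n = k then (1 : ℝ) else 0) * r ^ n) (r ^ k) := by
  convert hasSum_single (f := fun n => (if n = k then (1 : ℝ) else 0) * r ^ n) k
    fun n hn => by simp [hn] using 1
  simp

theorem PowerSeries.one_sub_C_mul_X_mul_eq_sub_X_mul {R : Type*} [CommRing R] {c : R}
    {F G H : PowerSeries R} (h₀ : coeff 0 F = coeff 0 G)
    (hs : ∀ n, coeff (n + 1) F + coeff n H = c * coeff n F + coeff (n + 1) G) :
    (1 - C c * X) * F = G - X * H := by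
  ext (_ | n)
  · simpa using h₀
  · simp only [sub_mul, one_mul, mul_assoc, map_sub, coeff_C_mul, coeff_succ_X_mul]
    linear_combination hs n

section GeneratingSeries

variable {α : Type*} [Fintype α] (w : List α)

theorem one_sub_C_mul_X_mul_mk_wordCount_not_infix {R : Type*} [CommRing R] (hw : w ≠ []) :
    (1 - C (Fintype.card α : R) * X) *
        PowerSeries.mk (fun l => (wordCount (fun x => ¬ w <:+: x) l : R)) =
      1 - X * PowerSeries.mk
        (fun l => (wordCount (fun x => ¬ w <:+: x ∧ w.tail <+: x) l : R)) := by
  refine one_sub_C_mul_X_mul_eq_sub_X_mul ?_ fun n => ?_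
  · simp [wordCount_not_infix_zero w hw]
  · simp only [coeff_mk, coeff_one, if_neg n.succ_ne_zero, add_zero]
    simpa using congrArg (Nat.cast : ℕ → R) (wordCount_not_infix_succ_add w hw n)

theorem one_sub_C_mul_X_mul_mk_wordCount_not_infix_prefix_tail {R : Type*} [CommRing R]
    (hw : w ≠ []) :
    (1 - C (Fintype.card α : R) * X) *
        PowerSeries.mk (fun l => (wordCount (fun x => ¬ w <:+: x ∧ w.tail <+: x) l : R)) =
      X ^ (w.length - 1) -
        X * PowerSeries.mk (fun l =>
          (wordCount (fun x => ¬ w <:+: x ∧ w.tail <+: x ∧ w.dropLast <:+ x) l : R)) := by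
  refine one_sub_C_mul_X_mul_eq_sub_X_mul ?_ fun n => ?_
  · simp only [coeff_mk, coeff_X_pow]
    simpa using congrArg (Nat.cast : ℕ → R)
      (wordCount_not_infix_prefix_tail_of_le w hw (Nat.zero_le _))
  · simp only [coeff_mk, coeff_X_pow]
    simpa using congrArg (Nat.cast : ℕ → R) (wordCount_not_infix_prefix_tail_succ_add w hw n)

theorem tendsto_wordCount_not_infix_mul_inv_pow (hw : w ≠ []) :
    Tendsto (fun l => (wordCount (fun x => ¬ w <:+: x) l : ℝ) * (Fintype.card α : ℝ)⁻¹ ^ l)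
      atTop (𝓝 0) := by
  set a := wordCount (fun x : List α => ¬ w <:+: x)
  have hc : (0 : ℝ) < Fintype.card α := by exact_mod_cast Fintype.card_pos_iff.2 ⟨w.head hw⟩
  refine tendsto_atTop_zero_of_antitone_of_le_mul (List.length_pos_iff.2 hw)
    (fun _ => by positivity) (antitone_nat_of_succ_le fun l => ?_) (fun m n => ?_) ?_
  · have h : (a (l + 1) : ℝ) ≤ Fintype.card α * a l := by
      exact_mod_cast Nat.le.intro (wordCount_not_infix_succ_add w hw l)
    calc (a (l + 1) : ℝ) * (Fintype.card α : ℝ)⁻¹ ^ (l + 1)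
        ≤ Fintype.card α * a l * (Fintype.card α : ℝ)⁻¹ ^ (l + 1) := by gcongr
      _ = a l * (Fintype.card α : ℝ)⁻¹ ^ l *
          (Fintype.card α * (Fintype.card α : ℝ)⁻¹) := by ring
      _ = a l * (Fintype.card α : ℝ)⁻¹ ^ l := by rw [mul_inv_cancel₀ hc.ne', mul_one]
  · have h : (a (m + n) : ℝ) ≤ a m * a n := by
      exact_mod_cast wordCount_add_le (P := fun x => ¬ w <:+: x) (Q := fun x => ¬ w <:+: x)
        (R := fun x => ¬ w <:+: x)
        (fun x y h => ⟨fun hx => h (hx.trans (List.prefix_append x y).isInfix),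
          fun hy => h (hy.trans (List.suffix_append x y).isInfix)⟩) m n
    calc (a (m + n) : ℝ) * (Fintype.card α : ℝ)⁻¹ ^ (m + n)
        ≤ a m * a n * (Fintype.card α : ℝ)⁻¹ ^ (m + n) := by gcongr
      _ = _ := by ring
  · have h : (a w.length : ℝ) < (Fintype.card α : ℝ) ^ w.length := by
      exact_mod_cast wordCount_lt_pow (P := fun x => ¬ w <:+: x) (not_not.2 (List.infix_refl w))
    rwa [inv_pow, ← div_eq_mul_inv, div_lt_one (by positivity)]

theorem hasSum_wordCount_not_infix_prefix_tail (hw : w ≠ []) :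
    HasSum (fun l => (wordCount (fun x => ¬ w <:+: x ∧ w.tail <+: x) l : ℝ) *
      (Fintype.card α : ℝ)⁻¹ ^ l) (Fintype.card α) := by
  have hc : (0 : ℝ) < Fintype.card α := by exact_mod_cast Fintype.card_pos_iff.2 ⟨w.head hw⟩
  simpa using hasSum_mul_inv_pow_of_succ_add hc
    (f := fun l => (wordCount (fun x => ¬ w <:+: x) l : ℝ))
    (by simp [wordCount_not_infix_zero w hw])
    (fun n => by
      simp only [n.succ_ne_zero, if_false, add_zero]
      exact_mod_cast wordCount_not_infix_succ_add w hw n)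
    (fun n => by positivity) (tendsto_wordCount_not_infix_mul_inv_pow w hw)
    (hasSum_ite_eq_mul_pow 0 _)

theorem hasSum_wordCount_not_infix_prefix_tail_suffix_dropLast (hw : w ≠ []) :
    HasSum (fun l =>
      (wordCount (fun x => ¬ w <:+: x ∧ w.tail <+: x ∧ w.dropLast <:+ x) l : ℝ) *
        (Fintype.card α : ℝ)⁻¹ ^ l) ((Fintype.card α : ℝ) ^ (2 - (w.length : ℤ))) := by
  have hc : (0 : ℝ) < Fintype.card α := by exact_mod_cast Fintype.card_pos_iff.2 ⟨w.head hw⟩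
  have hdecay : Tendsto (fun l => (wordCount (fun x => ¬ w <:+: x ∧ w.tail <+: x) l : ℝ) *
      (Fintype.card α : ℝ)⁻¹ ^ l) atTop (𝓝 0) :=
    squeeze_zero (fun l => by positivity) (fun l => by
        gcongr
        exact_mod_cast wordCount_mono (fun x (h : ¬ w <:+: x ∧ w.tail <+: x) => h.1) l)
      (tendsto_wordCount_not_infix_mul_inv_pow w hw)
  convert hasSum_mul_inv_pow_of_succ_add hc
    (h := fun l => (wordCount (fun x => ¬ w <:+: x ∧ w.tail <+: x ∧ w.dropLast <:+ x) l : ℝ))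
    (by exact_mod_cast wordCount_not_infix_prefix_tail_of_le w hw (Nat.zero_le _))
    (fun n => by exact_mod_cast wordCount_not_infix_prefix_tail_succ_add w hw n)
    (fun n => by positivity) hdecay (hasSum_ite_eq_mul_pow (w.length - 1) _) using 1
  rw [inv_pow, ← div_eq_mul_inv, ← zpow_natCast,
    show (2 : ℤ) - w.length = 1 - ((w.length - 1 : ℕ) : ℤ) by
      have := List.length_pos_iff.2 hw; omega,
    zpow_sub₀ hc.ne', zpow_one]

end GeneratingSeries

theorem Nxy_zero_eq_wordCount {b : ℕ} {w : List (Fin b)} (hw : w ≠ []) (x y : List (Fin b))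
    (l : ℕ) : Nxy b w x y 0 l = wordCount (fun s => ¬ w <:+: s ∧ x <+: s ∧ y <:+ s) l := by
  rw [Nxy, ← Nat.card_eq_fintype_card]
  exact wordCount_congr (P := fun s => occCount w s = 0 ∧ x <+: s ∧ y <:+ s)
    fun s _ => and_congr_left' (occCount_eq_zero_iff hw)

/-- The first identity is multiplied through by `t^{p-1}` to avoid negative exponents. -/
theorem stmt7_general (b : ℕ) (w : List (Fin b)) (hw : 1 ≤ w.length) :
    (1 - PowerSeries.C (b : ℚ) * X) * Zser b w (w.drop 1) [] 0 =
        (X : PowerSeries ℚ) ^ (w.length - 1) -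
          X * Zser b w (w.drop 1) (w.take (w.length - 1)) 0 ∧
    (1 - PowerSeries.C (b : ℚ) * X) * Zser b w [] [] 0 =
        1 - X * Zser b w (w.drop 1) [] 0 ∧
    ∑' l : ℕ, (Nxy b w (w.drop 1) [] 0 l : ℝ) * ((b : ℝ)⁻¹) ^ l = (b : ℝ) ∧
    ∑' l : ℕ, (Nxy b w (w.drop 1) (w.take (w.length - 1)) 0 l : ℝ) * ((b : ℝ)⁻¹) ^ l =
      (b : ℝ) ^ ((2 : ℤ) - (w.length : ℤ)) := by
  have hw₀ : w ≠ [] := List.ne_nil_of_length_pos hw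
  simp only [List.drop_one, ← List.dropLast_eq_take, Zser, Nxy_zero_eq_wordCount hw₀,
    List.nil_prefix, List.nil_suffix, and_true]
  refine ⟨?_, ?_, ?_, ?_⟩
  · simpa using one_sub_C_mul_X_mul_mk_wordCount_not_infix_prefix_tail (R := ℚ) w hw₀
  · simpa using one_sub_C_mul_X_mul_mk_wordCount_not_infix (R := ℚ) w hw₀
  · simpa using (hasSum_wordCount_not_infix_prefix_tail w hw₀).tsum_eq
  · simpa using (hasSum_wordCount_not_infix_prefix_tail_suffix_dropLast w hw₀).tsum_eq

/-- The two power series identities of Lemma c (the first multiplied through by `t^{p-1}`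
to avoid negative exponents), together with the evaluations `M_w(v,0) = b` and
`M_w(v,0,u) = b^{2-p}` obtained by substituting `t = 1/b`. -/
theorem stmt7 (b : ℕ) (hb : 1 < b) (w : List (Fin b)) (hw : 1 ≤ w.length) :
    (1 - PowerSeries.C (b : ℚ) * X) * Zser b w (w.drop 1) [] 0 =
        (X : PowerSeries ℚ) ^ (w.length - 1) -
          X * Zser b w (w.drop 1) (w.take (w.length - 1)) 0 ∧
    (1 - PowerSeries.C (b : ℚ) * X) * Zser b w [] [] 0 =
        1 - X * Zser b w (w.drop 1) [] 0 ∧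
    ∑' l : ℕ, (Nxy b w (w.drop 1) [] 0 l : ℝ) * ((b : ℝ)⁻¹) ^ l = (b : ℝ) ∧
    ∑' l : ℕ, (Nxy b w (w.drop 1) (w.take (w.length - 1)) 0 l : ℝ) * ((b : ℝ)⁻¹) ^ l =
      (b : ℝ) ^ ((2 : ℤ) - (w.length : ℤ)) :=
  stmt7_general b w hw
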